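/- Let (u_t) be i.i.d. with mean zero, variance 1, and finite fourth moment c4 = E[u_0^4], and let w_{uj} = (2πn)^{-1/2} ∑_{t=1}^n u_t e^{it λ_j} be the discrete Fourier transform at λ_j = 2πj/n. Then for 1 ≤ j1, j1', j2, j2' ≤ n−1, E[w_{u j1} · conj(w_{u j1'}) · w_{u j2} · conj(w_{u j2'})] = (4π²)^{-1}[ 1{j1=j1'}1{j2=j2'} + 1{j1+j2=n}1{j1'+j2'=n} + 1{j1=j2'}1{j2=j1'} + (c4−3) n^{-1} 1{j1+j2−j1'−j2' ∈ {0, n, −n}} ]. -/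

import Mathlib

open MeasureTheory ProbabilityTheory Complex Finset

/-- The discrete Fourier transform `w = (2πn)^{-1/2} ∑_{t=1}^n x_t e^{itλ_j}`,
`λ_j = 2πj/n`. -/
noncomputable def dft (n : ℕ) (x : ℕ → ℝ) (j : ℕ) : ℂ :=
  ((Real.sqrt (2 * Real.pi * n) : ℝ) : ℂ)⁻¹ *
    ∑ t ∈ Finset.Icc 1 n,
      (x t : ℂ) * Complex.exp (Complex.I * (t : ℂ) * ((2 * Real.pi * (j : ℝ) / (n : ℝ) : ℝ) : ℂ))

noncomputable def ec (n t : ℕ) (k : ℤ) : ℂ :=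
  Complex.exp (2 * Real.pi * Complex.I * t * k / n)

lemma ec_mul (n t : ℕ) (a b : ℤ) : ec n t a * ec n t b = ec n t (a + b) := by
  rw [ec, ec, ec, ← Complex.exp_add]
  congr 1
  push_cast
  ring

lemma ec_conj (n t : ℕ) (k : ℤ) : (starRingEnd ℂ) (ec n t k) = ec n t (-k) := by
  rw [ec, ec, ← Complex.exp_conj]
  congr 1
  simp only [map_div₀, map_mul, Complex.conj_I, Complex.conj_ofReal, map_natCast, map_intCast,
    map_ofNat]
  push_cast
  ring

lemma ec_pow (n t : ℕ) (k : ℤ) : ec n t k = ec n 1 k ^ t := by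
  rw [ec, ec, ← Complex.exp_nat_mul]
  congr 1
  push_cast
  ring

lemma G_eq (n : ℕ) (hn : 1 ≤ n) (k : ℤ) :
    ∑ t ∈ Finset.Icc 1 n, ec n t k = if (n : ℤ) ∣ k then (n : ℂ) else 0 := by
  have hn0 : (n : ℂ) ≠ 0 := Nat.cast_ne_zero.mpr (by omega)
  have h2 : (2 : ℂ) * Real.pi * Complex.I ≠ 0 := by
    have hpi : (Real.pi : ℂ) ≠ 0 := by simpa using Real.pi_ne_zero
    simp [Complex.I_ne_zero, hpi]
  by_cases hdvd : (n : ℤ) ∣ k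
  · obtain ⟨m, rfl⟩ := hdvd
    have h1 : ∀ t ∈ Finset.Icc 1 n, ec n t ((n : ℤ) * m) = 1 := by
      intro t _
      rw [ec, Complex.exp_eq_one_iff]
      refine ⟨t * m, ?_⟩
      push_cast
      field_simp
    rw [Finset.sum_congr rfl h1, Finset.sum_const, Nat.card_Icc,
      if_pos (Dvd.intro m rfl)]
    simp
  · have hz1 : ec n 1 k ≠ 1 := by
      rw [ec]
      intro h
      rw [Complex.exp_eq_one_iff] at h
      obtain ⟨m, hm⟩ := h
      apply hdvd
      refine ⟨m, ?_⟩
      have hk : (2 * Real.pi * Complex.I) * k = (2 * Real.pi * Complex.I) * (n * m) := by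
        field_simp at hm
        linear_combination (2 * (Real.pi:ℂ) * Complex.I) * hm
      have := mul_left_cancel₀ h2 hk
      exact_mod_cast this
    have hzn : ec n 1 k ^ n = 1 := by
      rw [← ec_pow, ec]
      have : (2 : ℂ) * Real.pi * Complex.I * n * k / n = k * (2 * Real.pi * Complex.I) := by
        field_simp
      rw [this, Complex.exp_int_mul_two_pi_mul_I]
    have key : ∑ t ∈ Finset.Icc 1 n, ec n t k = ec n 1 k * ∑ t ∈ Finset.range n, ec n 1 k ^ t := by
      rw [Finset.mul_sum]
      rw [show Finset.Icc 1 n = Finset.map ⟨Nat.succ, Nat.succ_injective⟩ (Finset.range n) by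
        ext x
        simp only [Finset.mem_map, Finset.mem_range, Function.Embedding.coeFn_mk,
          Finset.mem_Icc, Nat.succ_eq_add_one]
        constructor
        · rintro ⟨ha, hb⟩; exact ⟨x - 1, by omega, by omega⟩
        · rintro ⟨a, ha, rfl⟩; omega]
      rw [Finset.sum_map]
      refine Finset.sum_congr rfl fun t _ => ?_
      rw [ec_pow]
      simp [pow_succ]
      ring
    rw [key, geom_sum_eq hz1, hzn, if_neg hdvd]
    simp

variable (I : Finset ℕ) (f g h k : ℕ → ℂ)

lemma collapse (F : ℕ → ℕ → ℂ) :
    ∑ s ∈ I, ∑ t ∈ I, (if s = t then (1:ℂ) else 0) * F s t = ∑ s ∈ I, F s s := by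
  refine Finset.sum_congr rfl fun s hs => ?_
  simp only [ite_mul, one_mul, zero_mul]
  rw [Finset.sum_ite_eq]
  simp [hs]

lemma prod_split (A B : ℕ → ℕ → ℂ) :
    ∑ t1 ∈ I, ∑ t2 ∈ I, ∑ t3 ∈ I, ∑ t4 ∈ I, A t1 t2 * B t3 t4
      = (∑ t1 ∈ I, ∑ t2 ∈ I, A t1 t2) * (∑ t3 ∈ I, ∑ t4 ∈ I, B t3 t4) := by
  simp only [← Finset.mul_sum, ← Finset.sum_mul]

lemma part1 :
    ∑ t1 ∈ I, ∑ t2 ∈ I, ∑ t3 ∈ I, ∑ t4 ∈ I,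
      ((if t1 = t2 then (1:ℂ) else 0) * (if t3 = t4 then 1 else 0))
        * (f t1 * g t2 * h t3 * k t4)
    = (∑ t ∈ I, f t * g t) * (∑ t ∈ I, h t * k t) := by
  have : ∀ t1 t2 t3 t4 : ℕ,
      ((if t1 = t2 then (1:ℂ) else 0) * (if t3 = t4 then 1 else 0))
        * (f t1 * g t2 * h t3 * k t4)
      = ((if t1 = t2 then (1:ℂ) else 0) * (f t1 * g t2))
        * ((if t3 = t4 then (1:ℂ) else 0) * (h t3 * k t4)) := by
    intro t1 t2 t3 t4; ring
  simp only [this]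
  rw [prod_split, collapse, collapse]

lemma part2 :
    ∑ t1 ∈ I, ∑ t2 ∈ I, ∑ t3 ∈ I, ∑ t4 ∈ I,
      ((if t1 = t3 then (1:ℂ) else 0) * (if t2 = t4 then 1 else 0))
        * (f t1 * g t2 * h t3 * k t4)
    = (∑ t ∈ I, f t * h t) * (∑ t ∈ I, g t * k t) := by
  have hc : ∀ t1 : ℕ, ∑ t2 ∈ I, ∑ t3 ∈ I, ∑ t4 ∈ I,
      ((if t1 = t3 then (1:ℂ) else 0) * (if t2 = t4 then 1 else 0))
        * (f t1 * g t2 * h t3 * k t4)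
      = ∑ t3 ∈ I, ∑ t2 ∈ I, ∑ t4 ∈ I,
      ((if t1 = t3 then (1:ℂ) else 0) * (f t1 * h t3))
        * ((if t2 = t4 then (1:ℂ) else 0) * (g t2 * k t4)) := by
    intro t1
    rw [Finset.sum_comm]
    refine Finset.sum_congr rfl fun t3 _ => Finset.sum_congr rfl fun t2 _ =>
      Finset.sum_congr rfl fun t4 _ => by ring
  simp only [hc]
  rw [prod_split, collapse, collapse]

lemma part3 :
    ∑ t1 ∈ I, ∑ t2 ∈ I, ∑ t3 ∈ I, ∑ t4 ∈ I,
      ((if t1 = t4 then (1:ℂ) else 0) * (if t2 = t3 then 1 else 0))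
        * (f t1 * g t2 * h t3 * k t4)
    = (∑ t ∈ I, f t * k t) * (∑ t ∈ I, g t * h t) := by
  have hc : ∀ t1 : ℕ, ∑ t2 ∈ I, ∑ t3 ∈ I, ∑ t4 ∈ I,
      ((if t1 = t4 then (1:ℂ) else 0) * (if t2 = t3 then 1 else 0))
        * (f t1 * g t2 * h t3 * k t4)
      = ∑ t4 ∈ I, ∑ t2 ∈ I, ∑ t3 ∈ I,
      ((if t1 = t4 then (1:ℂ) else 0) * (f t1 * k t4))
        * ((if t2 = t3 then (1:ℂ) else 0) * (g t2 * h t3)) := by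
    intro t1
    rw [show (∑ t2 ∈ I, ∑ t3 ∈ I, ∑ t4 ∈ I,
      ((if t1 = t4 then (1:ℂ) else 0) * (if t2 = t3 then 1 else 0))
        * (f t1 * g t2 * h t3 * k t4))
      = ∑ t2 ∈ I, ∑ t4 ∈ I, ∑ t3 ∈ I,
      ((if t1 = t4 then (1:ℂ) else 0) * (if t2 = t3 then 1 else 0))
        * (f t1 * g t2 * h t3 * k t4) from
      Finset.sum_congr rfl fun t2 _ => Finset.sum_comm]
    rw [Finset.sum_comm]
    refine Finset.sum_congr rfl fun t4 _ => Finset.sum_congr rfl fun t2 _ =>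
      Finset.sum_congr rfl fun t3 _ => by ring
  simp only [hc]
  rw [prod_split, collapse, collapse]

lemma part4 :
    ∑ t1 ∈ I, ∑ t2 ∈ I, ∑ t3 ∈ I, ∑ t4 ∈ I,
      (if t1 = t2 ∧ t1 = t3 ∧ t1 = t4 then (1:ℂ) else 0)
        * (f t1 * g t2 * h t3 * k t4)
    = ∑ t ∈ I, f t * g t * h t * k t := by
  refine Finset.sum_congr rfl fun t1 h1 => ?_
  have key : ∀ (p q r : Prop) [Decidable p] [Decidable q] [Decidable r] (X : ℂ),
      (if p ∧ q ∧ r then (1:ℂ) else 0) * X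
        = (if r then (1:ℂ) else 0) * ((if q then (1:ℂ) else 0) *
            ((if p then (1:ℂ) else 0) * X)) := by
    intro p q r _ _ _ X
    by_cases hp : p <;> by_cases hq : q <;> by_cases hr : r <;> simp [hp, hq, hr]
  have : ∀ t2 t3 t4 : ℕ, (if t1 = t2 ∧ t1 = t3 ∧ t1 = t4 then (1:ℂ) else 0)
        * (f t1 * g t2 * h t3 * k t4)
      = (if t1 = t4 then (1:ℂ) else 0) * ((if t1 = t3 then (1:ℂ) else 0) *
          ((if t1 = t2 then (1:ℂ) else 0) * (f t1 * g t2 * h t3 * k t4))) := by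
    intro t2 t3 t4
    exact key _ _ _ _
  simp only [this]
  simp only [ite_mul, one_mul, zero_mul, Finset.sum_ite_eq, h1, if_true]

section Prob
variable {Ω : Type*} [MeasurableSpace Ω] {μ : Measure Ω} [IsProbabilityMeasure μ]
  {u : ℕ → Ω → ℝ}

-- |x^k| ≤ 1 + x^4 for k ≤ 4
lemma pow_abs_le {x : ℝ} {p : ℕ} (hp : p ≤ 4) : |x ^ p| ≤ 1 + x ^ 4 := by
  rw [_root_.abs_pow]
  rcases le_total |x| 1 with hx | hx
  · have h1 : |x| ^ p ≤ 1 := pow_le_one₀ (abs_nonneg x) hx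
    nlinarith [pow_nonneg (abs_nonneg x) 4, sq_nonneg (x^2)]
  · have h1 : |x| ^ p ≤ |x| ^ 4 := pow_le_pow_right₀ hx hp
    have h2 : |x| ^ 4 = x ^ 4 := by
      rw [show (4:ℕ) = 2 * 2 from rfl, pow_mul, pow_mul, _root_.sq_abs]
    nlinarith
  
lemma integrable_pow (hident : ∀ t, IdentDistrib (u t) (u 0) μ μ)
    (hmeas : ∀ t, Measurable (u t))
    (hmom4 : Integrable (fun ω => (u 0 ω) ^ 4) μ) (t p : ℕ) (hp : p ≤ 4) :
    Integrable (fun ω => (u t ω) ^ p) μ := by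
  have h0 : Integrable (fun ω => (u 0 ω) ^ p) μ := by
    refine Integrable.mono' ((integrable_const (1:ℝ)).add hmom4)
      ((hmeas 0).pow_const p).aestronglyMeasurable ?_
    filter_upwards with ω
    simpa using pow_abs_le hp
  exact (((hident t).comp (measurable_id.pow_const p)).integrable_iff).mpr h0

lemma moment_eq (hident : ∀ t, IdentDistrib (u t) (u 0) μ μ) (t p : ℕ) :
    ∫ ω, (u t ω) ^ p ∂μ = ∫ ω, (u 0 ω) ^ p ∂μ :=
  ((hident t).comp (measurable_id.pow_const p)).integral_eq

-- product of powers over distinct indices factorizes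
lemma integral_finset_prod_pow
    (hindep : iIndepFun u μ)
    (hmeas : ∀ t, Measurable (u t)) (s : Finset ℕ) (e : ℕ → ℕ) :
    ∫ ω, ∏ i ∈ s, u i ω ^ e i ∂μ = ∏ i ∈ s, ∫ ω, u i ω ^ e i ∂μ := by
  classical
  induction s using Finset.cons_induction with
  | empty => simp
  | cons a s ha ih =>
    have hv : iIndepFun (fun i ω => u i ω ^ e i) μ :=
      hindep.comp (fun i x => x ^ e i) (fun i => measurable_id.pow_const (e i))
    have hmv : ∀ i, Measurable fun ω => u i ω ^ e i :=
      fun i => (hmeas i).pow_const (e i)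
    have hind : IndepFun (∏ j ∈ s, fun ω => u j ω ^ e j) (fun ω => u a ω ^ e a) μ :=
      hv.indepFun_finsetProd_of_notMem hmv ha
    have hps : (fun ω => ∏ i ∈ s, u i ω ^ e i) = ∏ j ∈ s, fun ω => u j ω ^ e j := by
      funext ω; rw [Finset.prod_apply]
    simp only [Finset.prod_cons]
    rw [← ih]
    have : ∫ ω, u a ω ^ e a * ∏ i ∈ s, u i ω ^ e i ∂μ
        = (∫ ω, ∏ i ∈ s, u i ω ^ e i ∂μ) * ∫ ω, u a ω ^ e a ∂μ := by
      rw [show (fun ω => u a ω ^ e a * ∏ i ∈ s, u i ω ^ e i)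
            = (fun ω => (∏ i ∈ s, u i ω ^ e i) * u a ω ^ e a) from funext fun ω => mul_comm _ _]
      have h := hind.integral_mul_eq_mul_integral
        (hps ▸ (Finset.measurable_prod s fun i _ => hmv i).aestronglyMeasurable)
        (hmv a).aestronglyMeasurable
      rw [← hps] at h
      exact h
    rw [this]; ring

end Prob

section Mom4
variable {Ω : Type*} [MeasurableSpace Ω] {μ : Measure Ω} [IsProbabilityMeasure μ]
  {u : ℕ → Ω → ℝ}
  (hindep : iIndepFun u μ)
  (hident : ∀ t, IdentDistrib (u t) (u 0) μ μ)
  (hmeas : ∀ t, Measurable (u t))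
  (hmean : ∫ ω, u 0 ω ∂μ = 0)
  (hvar : ∫ ω, (u 0 ω) ^ 2 ∂μ = 1)

include hindep hident hmeas hmean hvar in
lemma mom4 (a b c d : ℕ) :
    ∫ ω, u a ω * u b ω * u c ω * u d ω ∂μ =
      (if a = b then (1:ℝ) else 0) * (if c = d then 1 else 0)
      + (if a = c then 1 else 0) * (if b = d then 1 else 0)
      + (if a = d then 1 else 0) * (if b = c then 1 else 0)
      + ((∫ ω, (u 0 ω) ^ 4 ∂μ) - 3) * (if a = b ∧ a = c ∧ a = d then 1 else 0) := by
  classical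
  have hz : ∀ t, ∫ ω, u t ω ∂μ = 0 := fun t => ((hident t).integral_eq).trans hmean
  have hz1 : ∀ t, ∫ ω, u t ω ^ 1 ∂μ = 0 := fun t => by
    simpa using hz t
  have hv2 : ∀ t, ∫ ω, u t ω ^ 2 ∂μ = 1 := fun t => (moment_eq hident t 2).trans hvar
  -- helper for the "some index appears exactly once" zero cases will be inlined
  by_cases hab : a = b
  · subst hab
    by_cases hac : a = c
    · subst hac
      by_cases had : a = d
      · subst had
        -- all equal
        have : (fun ω => u a ω * u a ω * u a ω * u a ω) = fun ω => u a ω ^ 4 := by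
          funext ω; ring
        rw [this, moment_eq hident a 4]
        simp only [eq_self_iff_true, if_true, and_self, mul_one, one_mul]
        ring
      · -- a = b = c ≠ d : triple * single
        have key := integral_finset_prod_pow hindep hmeas {a, d}
          (fun i => if i = a then 3 else 1)
        have hda : d ≠ a := fun h => had h.symm
        rw [Finset.prod_pair (fun h => had h)] at key
        simp only [eq_self_iff_true, if_true, if_neg hda, pow_one] at key
        have : (fun ω => u a ω * u a ω * u a ω * u d ω)
            = fun ω => (∏ i ∈ ({a, d} : Finset ℕ), u i ω ^ (if i = a then 3 else 1)) := by
          funext ω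
          rw [Finset.prod_pair (fun h => had h)]
          simp only [eq_self_iff_true, if_true, if_neg hda, pow_one]
          ring
        rw [this, key, hz d]
        simp [had]
    · by_cases had : a = d
      · subst had
        -- a = b = d ≠ c : triple * single
        have hca : c ≠ a := fun h => hac h.symm
        have key := integral_finset_prod_pow hindep hmeas {a, c}
          (fun i => if i = a then 3 else 1)
        rw [Finset.prod_pair (fun h => hac h)] at key
        simp only [eq_self_iff_true, if_true, if_neg hca, pow_one] at key
        have : (fun ω => u a ω * u a ω * u c ω * u a ω)
            = fun ω => (∏ i ∈ ({a, c} : Finset ℕ), u i ω ^ (if i = a then 3 else 1)) := by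
          funext ω
          rw [Finset.prod_pair (fun h => hac h)]
          simp only [eq_self_iff_true, if_true, if_neg hca, pow_one]
          ring
        rw [this, key, hz c]
        simp [hac, hca]
      · by_cases hcd : c = d
        · subst hcd
          -- (aa)(cc), a ≠ c : two pairs
          have key := integral_finset_prod_pow hindep hmeas {a, c} (fun _ => 2)
          rw [Finset.prod_pair (fun h => hac h)] at key
          have : (fun ω => u a ω * u a ω * u c ω * u c ω)
              = fun ω => (∏ i ∈ ({a, c} : Finset ℕ), u i ω ^ 2) := by
            funext ω
            rw [Finset.prod_pair (fun h => hac h)]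
            ring
          rw [this, key, hv2 a, hv2 c]
          simp [hac]
        · -- a = b, c, d distinct singles
          have hca : c ≠ a := fun h => hac h.symm
          have hda : d ≠ a := fun h => had h.symm
          have key := integral_finset_prod_pow hindep hmeas {a, c, d}
            (fun i => if i = a then 2 else 1)
          have hacd : a ∉ ({c, d} : Finset ℕ) := by simp [hac, had]
          have hcd' : c ∉ ({d} : Finset ℕ) := by simp [hcd]
          rw [Finset.prod_insert hacd, Finset.prod_insert hcd', Finset.prod_singleton] at key
          simp only [eq_self_iff_true, if_true, if_neg hca, if_neg hda, pow_one] at key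
          have : (fun ω => u a ω * u a ω * u c ω * u d ω)
              = fun ω => (∏ i ∈ ({a, c, d} : Finset ℕ), u i ω ^ (if i = a then 2 else 1)) := by
            funext ω
            rw [Finset.prod_insert hacd, Finset.prod_insert hcd', Finset.prod_singleton]
            simp only [eq_self_iff_true, if_true, if_neg hca, if_neg hda, pow_one]
            ring
          rw [this, key, hz c]
          simp [hac, had, hcd]
  · by_cases hac : a = c
    · subst hac
      by_cases hbd : b = d
      · subst hbd
        -- (ac)(bd), a ≠ b : two pairs
        have key := integral_finset_prod_pow hindep hmeas {a, b} (fun _ => 2)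
        rw [Finset.prod_pair (fun h => hab h)] at key
        have : (fun ω => u a ω * u b ω * u a ω * u b ω)
            = fun ω => (∏ i ∈ ({a, b} : Finset ℕ), u i ω ^ 2) := by
          funext ω
          rw [Finset.prod_pair (fun h => hab h)]
          ring
        rw [this, key, hv2 a, hv2 b]
        simp [hab]
      · by_cases had : a = d
        · subst had
          -- a = c = d ≠ b : triple * single
          have hba : b ≠ a := fun h => hab h.symm
          have key := integral_finset_prod_pow hindep hmeas {a, b}
            (fun i => if i = a then 3 else 1)
          rw [Finset.prod_pair (fun h => hab h)] at key
          simp only [eq_self_iff_true, if_true, if_neg hba, pow_one] at key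
          have : (fun ω => u a ω * u b ω * u a ω * u a ω)
              = fun ω => (∏ i ∈ ({a, b} : Finset ℕ), u i ω ^ (if i = a then 3 else 1)) := by
            funext ω
            rw [Finset.prod_pair (fun h => hab h)]
            simp only [eq_self_iff_true, if_true, if_neg hba, pow_one]
            ring
          rw [this, key, hz b]
          simp [hab, hba]
        · -- a = c, b, d distinct singles (b ≠ d, b ≠ a, d ≠ a)
          have hba : b ≠ a := fun h => hab h.symm
          have hda : d ≠ a := fun h => had h.symm
          have key := integral_finset_prod_pow hindep hmeas {a, b, d}
            (fun i => if i = a then 2 else 1)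
          have habd : a ∉ ({b, d} : Finset ℕ) := by simp [hab, had]
          have hbd' : b ∉ ({d} : Finset ℕ) := by simp [hbd]
          rw [Finset.prod_insert habd, Finset.prod_insert hbd', Finset.prod_singleton] at key
          simp only [eq_self_iff_true, if_true, if_neg hba, if_neg hda, pow_one] at key
          have : (fun ω => u a ω * u b ω * u a ω * u d ω)
              = fun ω => (∏ i ∈ ({a, b, d} : Finset ℕ), u i ω ^ (if i = a then 2 else 1)) := by
            funext ω
            rw [Finset.prod_insert habd, Finset.prod_insert hbd', Finset.prod_singleton]
            simp only [eq_self_iff_true, if_true, if_neg hba, if_neg hda, pow_one]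
            ring
          rw [this, key, hz b]
          simp [hab, hbd, had]
    · by_cases had : a = d
      · subst had
        by_cases hbc : b = c
        · subst hbc
          -- (ad)(bc), a ≠ b : two pairs
          have key := integral_finset_prod_pow hindep hmeas {a, b} (fun _ => 2)
          rw [Finset.prod_pair (fun h => hab h)] at key
          have : (fun ω => u a ω * u b ω * u b ω * u a ω)
              = fun ω => (∏ i ∈ ({a, b} : Finset ℕ), u i ω ^ 2) := by
            funext ω
            rw [Finset.prod_pair (fun h => hab h)]
            ring
          rw [this, key, hv2 a, hv2 b]
          simp [hab, hac]
        · -- a = d, b, c distinct singles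
          have hba : b ≠ a := fun h => hab h.symm
          have hca : c ≠ a := fun h => hac h.symm
          have key := integral_finset_prod_pow hindep hmeas {a, b, c}
            (fun i => if i = a then 2 else 1)
          have habc : a ∉ ({b, c} : Finset ℕ) := by simp [hab, hac]
          have hbc' : b ∉ ({c} : Finset ℕ) := by simp [hbc]
          rw [Finset.prod_insert habc, Finset.prod_insert hbc', Finset.prod_singleton] at key
          simp only [eq_self_iff_true, if_true, if_neg hba, if_neg hca, pow_one] at key
          have : (fun ω => u a ω * u b ω * u c ω * u a ω)
              = fun ω => (∏ i ∈ ({a, b, c} : Finset ℕ), u i ω ^ (if i = a then 2 else 1)) := by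
            funext ω
            rw [Finset.prod_insert habc, Finset.prod_insert hbc', Finset.prod_singleton]
            simp only [eq_self_iff_true, if_true, if_neg hba, if_neg hca, pow_one]
            ring
          rw [this, key, hz b]
          simp [hab, hac, hbc]
      · by_cases hbc : b = c
        · subst hbc
          by_cases hbd : b = d
          · subst hbd
            -- b = c = d ≠ a : single * triple
            have hba : b ≠ a := fun h => hab h.symm
            have key := integral_finset_prod_pow hindep hmeas {a, b}
              (fun i => if i = b then 3 else 1)
            rw [Finset.prod_pair (fun h => hab h)] at key
            simp only [eq_self_iff_true, if_true, if_neg hab, pow_one] at key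
            have : (fun ω => u a ω * u b ω * u b ω * u b ω)
                = fun ω => (∏ i ∈ ({a, b} : Finset ℕ), u i ω ^ (if i = b then 3 else 1)) := by
              funext ω
              rw [Finset.prod_pair (fun h => hab h)]
              simp only [eq_self_iff_true, if_true, if_neg hab, pow_one]
              ring
            rw [this, key, hz a]
            simp [hab, hba]
          · -- b = c pair, a, d singles
            have hba : b ≠ a := fun h => hab h.symm
            have hdb : d ≠ b := fun h => hbd h.symm
            have key := integral_finset_prod_pow hindep hmeas {b, a, d}
              (fun i => if i = b then 2 else 1)
            have hbad : b ∉ ({a, d} : Finset ℕ) := by simp [hba, hbd]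
            have had' : a ∉ ({d} : Finset ℕ) := by simp [had]
            rw [Finset.prod_insert hbad, Finset.prod_insert had', Finset.prod_singleton] at key
            simp only [eq_self_iff_true, if_true, if_neg hab, if_neg hdb, pow_one] at key
            have : (fun ω => u a ω * u b ω * u b ω * u d ω)
                = fun ω => (∏ i ∈ ({b, a, d} : Finset ℕ), u i ω ^ (if i = b then 2 else 1)) := by
              funext ω
              rw [Finset.prod_insert hbad, Finset.prod_insert had', Finset.prod_singleton]
              simp only [eq_self_iff_true, if_true, if_neg hab, if_neg hdb, pow_one]
              ring
            rw [this, key, hz a]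
            simp [hab, hac, hbd, had]
        · by_cases hbd : b = d
          · subst hbd
            -- b = d pair, a, c singles
            have hba : b ≠ a := fun h => hab h.symm
            have hcb : c ≠ b := fun h => hbc h.symm
            have key := integral_finset_prod_pow hindep hmeas {b, a, c}
              (fun i => if i = b then 2 else 1)
            have hbac : b ∉ ({a, c} : Finset ℕ) := by simp [hba, hbc]
            have hac' : a ∉ ({c} : Finset ℕ) := by simp [hac]
            rw [Finset.prod_insert hbac, Finset.prod_insert hac', Finset.prod_singleton] at key
            simp only [eq_self_iff_true, if_true, if_neg hab, if_neg hcb, pow_one] at key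
            have : (fun ω => u a ω * u b ω * u c ω * u b ω)
                = fun ω => (∏ i ∈ ({b, a, c} : Finset ℕ), u i ω ^ (if i = b then 2 else 1)) := by
              funext ω
              rw [Finset.prod_insert hbac, Finset.prod_insert hac', Finset.prod_singleton]
              simp only [eq_self_iff_true, if_true, if_neg hab, if_neg hcb, pow_one]
              ring
            rw [this, key, hz a]
            simp [hab, hac, hbc]
          · by_cases hcd : c = d
            · subst hcd
              -- c = d pair, a, b singles
              have hca : c ≠ a := fun h => hac h.symm
              have hcb : c ≠ b := fun h => hbc h.symm
              have key := integral_finset_prod_pow hindep hmeas {c, a, b}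
                (fun i => if i = c then 2 else 1)
              have hcab : c ∉ ({a, b} : Finset ℕ) := by simp [hca, hcb]
              have hab' : a ∉ ({b} : Finset ℕ) := by simp [hab]
              rw [Finset.prod_insert hcab, Finset.prod_insert hab', Finset.prod_singleton] at key
              simp only [eq_self_iff_true, if_true, if_neg hac, if_neg hbc, pow_one] at key
              have : (fun ω => u a ω * u b ω * u c ω * u c ω)
                  = fun ω => (∏ i ∈ ({c, a, b} : Finset ℕ), u i ω ^ (if i = c then 2 else 1)) := by
                funext ω
                rw [Finset.prod_insert hcab, Finset.prod_insert hab', Finset.prod_singleton]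
                simp only [eq_self_iff_true, if_true, if_neg hac, if_neg hbc, pow_one]
                ring
              rw [this, key, hz a]
              simp [hab, hac, had, hbc]
            · -- all distinct
              have key := integral_finset_prod_pow hindep hmeas {a, b, c, d} (fun _ => 1)
              have h1 : a ∉ ({b, c, d} : Finset ℕ) := by simp [hab, hac, had]
              have h2 : b ∉ ({c, d} : Finset ℕ) := by simp [hbc, hbd]
              have h3 : c ∉ ({d} : Finset ℕ) := by simp [hcd]
              rw [Finset.prod_insert h1, Finset.prod_insert h2, Finset.prod_insert h3,
                Finset.prod_singleton] at key
              simp only [pow_one] at key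
              have : (fun ω => u a ω * u b ω * u c ω * u d ω)
                  = fun ω => (∏ i ∈ ({a, b, c, d} : Finset ℕ), u i ω) := by
                funext ω
                rw [Finset.prod_insert h1, Finset.prod_insert h2, Finset.prod_insert h3,
                  Finset.prod_singleton]
                ring
              rw [this, key, hz a]
              simp [hab, hac, had, hbc, hbd, hcd]
end Mom4

-- abs bound
lemma abs4 (a b c d : ℝ) : |a * b * c * d| ≤ a ^ 4 + b ^ 4 + c ^ 4 + d ^ 4 := by
  rcases abs_cases (a * b * c * d) with ⟨h, _⟩ | ⟨h, _⟩ <;> rw [h] <;>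
    nlinarith [sq_nonneg (a * b - c * d), sq_nonneg (a * b + c * d), sq_nonneg (a ^ 2 - b ^ 2),
      sq_nonneg (c ^ 2 - d ^ 2), sq_nonneg (a * b), sq_nonneg (c * d),
      sq_nonneg (a ^ 2 + b ^ 2), sq_nonneg (c ^ 2 + d ^ 2)]

-- divisibility helpers
lemma dvd_iff_zero {n d : ℤ} (h1 : -n < d) (h2 : d < n) : n ∣ d ↔ d = 0 := by
  constructor
  · intro h
    exact Int.eq_zero_of_abs_lt_dvd h (abs_lt.mpr ⟨h1, h2⟩)
  · rintro rfl; exact dvd_zero n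

lemma dvd_iff_n {n d : ℤ} (hn : 0 < n) (h1 : 0 < d) (h2 : d < 2 * n) : n ∣ d ↔ d = n := by
  constructor
  · rintro ⟨k, rfl⟩
    have hk1 : 0 < k := by nlinarith
    have hk2 : k < 2 := by nlinarith
    have : k = 1 := by omega
    subst this; ring
  · rintro rfl; exact dvd_refl _

lemma dvd_iff_three {n d : ℤ} (hn : 0 < n) (h1 : -(2 * n) < d) (h2 : d < 2 * n) :
    n ∣ d ↔ (d = 0 ∨ d = n ∨ d = -n) := by
  constructor
  · rintro ⟨k, rfl⟩
    have hk1 : k < 2 := by nlinarith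
    have hk2 : -2 < k := by nlinarith
    have : k = -1 ∨ k = 0 ∨ k = 1 := by omega
    rcases this with rfl | rfl | rfl
    · exact Or.inr (Or.inr (by ring))
    · exact Or.inl (by ring)
    · exact Or.inr (Or.inl (by ring))
  · rintro (rfl | rfl | rfl)
    · exact dvd_zero n
    · exact dvd_refl _
    · exact dvd_neg.mpr (dvd_refl _)

lemma part4c (I : Finset ℕ) (f g h k : ℕ → ℂ) (c' : ℂ) :
    ∑ t1 ∈ I, ∑ t2 ∈ I, ∑ t3 ∈ I, ∑ t4 ∈ I,
      c' * ((if t1 = t2 ∧ t1 = t3 ∧ t1 = t4 then (1:ℂ) else 0)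
        * (f t1 * g t2 * h t3 * k t4))
    = c' * ∑ t ∈ I, f t * g t * h t * k t := by
  rw [← part4 I f g h k]
  exact (by simp only [Finset.mul_sum] :
    c' * (∑ t1 ∈ I, ∑ t2 ∈ I, ∑ t3 ∈ I, ∑ t4 ∈ I,
      (if t1 = t2 ∧ t1 = t3 ∧ t1 = t4 then (1:ℂ) else 0) * (f t1 * g t2 * h t3 * k t4)) = _).symm

lemma sum_mul_sum4 (S : Finset ℕ) (f g h k : ℕ → ℂ) :
    (∑ a ∈ S, f a) * (∑ b ∈ S, g b) * (∑ c ∈ S, h c) * (∑ d ∈ S, k d)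
      = ∑ a ∈ S, ∑ b ∈ S, ∑ c ∈ S, ∑ d ∈ S, f a * g b * h c * k d := by
  rw [show (∑ a ∈ S, f a) * (∑ b ∈ S, g b) * (∑ c ∈ S, h c) * (∑ d ∈ S, k d)
      = (∑ a ∈ S, f a) * ((∑ b ∈ S, g b) * ((∑ c ∈ S, h c) * (∑ d ∈ S, k d))) by ring,
    Finset.sum_mul]
  refine Finset.sum_congr rfl fun a _ => ?_
  rw [show f a * ((∑ b ∈ S, g b) * ((∑ c ∈ S, h c) * (∑ d ∈ S, k d)))
      = (∑ b ∈ S, g b) * (f a * ((∑ c ∈ S, h c) * (∑ d ∈ S, k d))) by ring,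
    Finset.sum_mul]
  refine Finset.sum_congr rfl fun b _ => ?_
  rw [show g b * (f a * ((∑ c ∈ S, h c) * (∑ d ∈ S, k d)))
      = (∑ c ∈ S, h c) * (g b * (f a * (∑ d ∈ S, k d))) by ring,
    Finset.sum_mul]
  refine Finset.sum_congr rfl fun c _ => ?_
  rw [show h c * (g b * (f a * (∑ d ∈ S, k d)))
      = (∑ d ∈ S, k d) * (h c * (g b * f a)) by ring,
    Finset.sum_mul]
  exact Finset.sum_congr rfl fun d _ => by ring

lemma sum_eval (n : ℕ) (hn : 1 ≤ n) (c : ℝ) (j1 j1' j2 j2' : ℕ)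
    (h1 : 1 ≤ j1) (h1' : 1 ≤ j1') (h2 : 1 ≤ j2) (h2' : 1 ≤ j2')
    (h1n : j1 ≤ n - 1) (h1'n : j1' ≤ n - 1) (h2n : j2 ≤ n - 1) (h2'n : j2' ≤ n - 1) :
    ∑ t1 ∈ Finset.Icc 1 n, ∑ t2 ∈ Finset.Icc 1 n, ∑ t3 ∈ Finset.Icc 1 n, ∑ t4 ∈ Finset.Icc 1 n,
      (ec n t1 (j1:ℤ) * ec n t2 (-(j1':ℤ)) * ec n t3 (j2:ℤ) * ec n t4 (-(j2':ℤ))) *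
        (((if t1 = t2 then (1:ℝ) else 0) * (if t3 = t4 then 1 else 0)
          + (if t1 = t3 then 1 else 0) * (if t2 = t4 then 1 else 0)
          + (if t1 = t4 then 1 else 0) * (if t2 = t3 then 1 else 0)
          + (c - 3) * (if t1 = t2 ∧ t1 = t3 ∧ t1 = t4 then 1 else 0) : ℝ) : ℂ)
    = (n:ℂ)^2 * ((if j1 = j1' then (1:ℂ) else 0) * (if j2 = j2' then 1 else 0))
      + (n:ℂ)^2 * ((if j1 + j2 = n then (1:ℂ) else 0) * (if j1' + j2' = n then 1 else 0))
      + (n:ℂ)^2 * ((if j1 = j2' then (1:ℂ) else 0) * (if j2 = j1' then 1 else 0))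
      + ((c:ℂ) - 3) * (n:ℂ) *
          (if ((j1 : ℤ) + j2 - j1' - j2' = 0 ∨ (j1 : ℤ) + j2 - j1' - j2' = n
              ∨ (j1 : ℤ) + j2 - j1' - j2' = -(n : ℤ)) then 1 else 0) := by
  have hn0 : (0:ℤ) < n := by exact_mod_cast hn
  have hterm : ∀ t1 t2 t3 t4 : ℕ,
      (ec n t1 (j1:ℤ) * ec n t2 (-(j1':ℤ)) * ec n t3 (j2:ℤ) * ec n t4 (-(j2':ℤ))) *
        (((if t1 = t2 then (1:ℝ) else 0) * (if t3 = t4 then 1 else 0)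
          + (if t1 = t3 then 1 else 0) * (if t2 = t4 then 1 else 0)
          + (if t1 = t4 then 1 else 0) * (if t2 = t3 then 1 else 0)
          + (c - 3) * (if t1 = t2 ∧ t1 = t3 ∧ t1 = t4 then 1 else 0) : ℝ) : ℂ)
      = ((if t1 = t2 then (1:ℂ) else 0) * (if t3 = t4 then 1 else 0))
          * (ec n t1 (j1:ℤ) * ec n t2 (-(j1':ℤ)) * ec n t3 (j2:ℤ) * ec n t4 (-(j2':ℤ)))
        + ((if t1 = t3 then (1:ℂ) else 0) * (if t2 = t4 then 1 else 0))
          * (ec n t1 (j1:ℤ) * ec n t2 (-(j1':ℤ)) * ec n t3 (j2:ℤ) * ec n t4 (-(j2':ℤ)))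
        + ((if t1 = t4 then (1:ℂ) else 0) * (if t2 = t3 then 1 else 0))
          * (ec n t1 (j1:ℤ) * ec n t2 (-(j1':ℤ)) * ec n t3 (j2:ℤ) * ec n t4 (-(j2':ℤ)))
        + ((c:ℂ) - 3) * ((if t1 = t2 ∧ t1 = t3 ∧ t1 = t4 then (1:ℂ) else 0)
          * (ec n t1 (j1:ℤ) * ec n t2 (-(j1':ℤ)) * ec n t3 (j2:ℤ) * ec n t4 (-(j2':ℤ)))) := by
    intro t1 t2 t3 t4
    push_cast [apply_ite (Complex.ofReal)]
    ring
  simp only [hterm, Finset.sum_add_distrib]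
  rw [part1, part2, part3, part4c]
  simp only [ec_mul]
  simp only [G_eq n hn]
  have e1 : ((n:ℤ) ∣ ((j1:ℤ) + -(j1':ℤ))) ↔ j1 = j1' := by
    rw [dvd_iff_zero (by omega) (by omega)]; omega
  have e1b : ((n:ℤ) ∣ ((j2:ℤ) + -(j2':ℤ))) ↔ j2 = j2' := by
    rw [dvd_iff_zero (by omega) (by omega)]; omega
  have e2 : ((n:ℤ) ∣ ((j1:ℤ) + (j2:ℤ))) ↔ j1 + j2 = n := by
    rw [dvd_iff_n hn0 (by omega) (by omega)]; omega
  have e2' : ((n:ℤ) ∣ (-(j1':ℤ) + -(j2':ℤ))) ↔ j1' + j2' = n := by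
    rw [show (-(j1':ℤ) + -(j2':ℤ)) = -((j1':ℤ) + (j2':ℤ)) by ring, dvd_neg,
      dvd_iff_n hn0 (by omega) (by omega)]; omega
  have e3 : ((n:ℤ) ∣ ((j1:ℤ) + -(j2':ℤ))) ↔ j1 = j2' := by
    rw [dvd_iff_zero (by omega) (by omega)]; omega
  have e3' : ((n:ℤ) ∣ (-(j1':ℤ) + (j2:ℤ))) ↔ j2 = j1' := by
    rw [dvd_iff_zero (by omega) (by omega)]; omega
  have e4 : ((n:ℤ) ∣ ((j1:ℤ) + -(j1':ℤ) + (j2:ℤ) + -(j2':ℤ)))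
      ↔ ((j1 : ℤ) + j2 - j1' - j2' = 0 ∨ (j1 : ℤ) + j2 - j1' - j2' = n
          ∨ (j1 : ℤ) + j2 - j1' - j2' = -(n : ℤ)) := by
    rw [dvd_iff_three hn0 (by omega) (by omega)]; omega
  simp only [e1, e1b, e2, e2', e3, e3', e4]
  have hifn : ∀ (P : Prop) (inst : Decidable P),
      (if P then (n:ℂ) else 0) = (n:ℂ) * (if P then 1 else 0) := by
    intro P inst; split_ifs <;> ring
  simp only [hifn]
  ring

section Main
variable {Ω : Type*} [MeasurableSpace Ω] {μ : Measure Ω} [IsProbabilityMeasure μ]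
  {u : ℕ → Ω → ℝ}

lemma int4 (hident : ∀ t, IdentDistrib (u t) (u 0) μ μ)
    (hmeas : ∀ t, Measurable (u t))
    (hmom4 : Integrable (fun ω => (u 0 ω) ^ 4) μ) (a b c d : ℕ) :
    Integrable (fun ω => u a ω * u b ω * u c ω * u d ω) μ := by
  have hi : ∀ t, Integrable (fun ω => u t ω ^ 4) μ :=
    fun t => integrable_pow hident hmeas hmom4 t 4 le_rfl
  refine Integrable.mono' (((hi a).add (hi b)).add ((hi c).add (hi d))) ?_ ?_
  · exact ((((hmeas a).mul (hmeas b)).mul (hmeas c)).mul (hmeas d)).aestronglyMeasurable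
  · filter_upwards with ω
    rw [Real.norm_eq_abs]
    have h := abs4 (u a ω) (u b ω) (u c ω) (u d ω)
    simp only [Pi.add_apply]
    linarith

lemma integral_quad_sum (I : Finset ℕ) (F : ℕ → ℕ → ℕ → ℕ → Ω → ℂ)
    (hint : ∀ t1 t2 t3 t4, Integrable (F t1 t2 t3 t4) μ) :
    ∫ ω, ∑ t1 ∈ I, ∑ t2 ∈ I, ∑ t3 ∈ I, ∑ t4 ∈ I, F t1 t2 t3 t4 ω ∂μ
      = ∑ t1 ∈ I, ∑ t2 ∈ I, ∑ t3 ∈ I, ∑ t4 ∈ I, ∫ ω, F t1 t2 t3 t4 ω ∂μ := by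
  rw [integral_finset_sum _ (fun t1 _ => integrable_finset_sum _ (fun t2 _ =>
    integrable_finset_sum _ (fun t3 _ => integrable_finset_sum _ (fun t4 _ => hint _ _ _ _))))]
  refine Finset.sum_congr rfl fun t1 _ => ?_
  rw [integral_finset_sum _ (fun t2 _ => integrable_finset_sum _ (fun t3 _ =>
    integrable_finset_sum _ (fun t4 _ => hint _ _ _ _)))]
  refine Finset.sum_congr rfl fun t2 _ => ?_
  rw [integral_finset_sum _ (fun t3 _ => integrable_finset_sum _ (fun t4 _ => hint _ _ _ _))]
  refine Finset.sum_congr rfl fun t3 _ => ?_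
  exact integral_finset_sum _ (fun t4 _ => hint _ _ _ _)

end Main

lemma final_arith (n : ℕ) (hn : 1 ≤ n) (c' A B C D : ℂ) :
    ((((2 * Real.pi * n) ^ 2 : ℝ) : ℂ))⁻¹ *
        ((n:ℂ)^2 * A + (n:ℂ)^2 * B + (n:ℂ)^2 * C + c' * (n:ℂ) * D)
      = (((4 * Real.pi ^ 2 : ℝ) : ℂ))⁻¹ * (A + B + C + c' * ((n:ℂ))⁻¹ * D) := by
  have hn0 : (n:ℂ) ≠ 0 := Nat.cast_ne_zero.mpr (by omega)
  have hπ : (Real.pi:ℂ) ≠ 0 := by simpa using Real.pi_ne_zero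
  push_cast
  field_simp
  ring

lemma integral_ofReal'' {Ω : Type*} [MeasurableSpace Ω] (μ : Measure Ω) (f : Ω → ℝ) :
    ∫ ω, ((f ω : ℝ) : ℂ) ∂μ = ((∫ ω, f ω ∂μ : ℝ) : ℂ) :=
  integral_ofReal

lemma quad_mul_const (I : Finset ℕ) (c' : ℂ) (F : ℕ → ℕ → ℕ → ℕ → ℂ) :
    ∑ t1 ∈ I, ∑ t2 ∈ I, ∑ t3 ∈ I, ∑ t4 ∈ I, c' * F t1 t2 t3 t4
      = c' * ∑ t1 ∈ I, ∑ t2 ∈ I, ∑ t3 ∈ I, ∑ t4 ∈ I, F t1 t2 t3 t4 :=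
  (by simp only [Finset.mul_sum] :
    c' * (∑ t1 ∈ I, ∑ t2 ∈ I, ∑ t3 ∈ I, ∑ t4 ∈ I, F t1 t2 t3 t4) = _).symm

/-- Expectation of a product of four discrete Fourier transforms of an i.i.d.
mean-zero, unit-variance sequence with finite fourth moment `c4 = E u₀⁴`. -/
theorem stmt4 {Ω : Type*} [MeasurableSpace Ω] (μ : Measure Ω) [IsProbabilityMeasure μ]
    (u : ℕ → Ω → ℝ)
    (hindep : iIndepFun u μ)
    (hident : ∀ t, IdentDistrib (u t) (u 0) μ μ)
    (hmeas : ∀ t, Measurable (u t))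
    (hmean : ∫ ω, u 0 ω ∂μ = 0)
    (hvar : ∫ ω, (u 0 ω) ^ 2 ∂μ = 1)
    (hmom4 : Integrable (fun ω => (u 0 ω) ^ 4) μ)
    (n : ℕ) (hn : 1 ≤ n)
    (j1 j1' j2 j2' : ℕ)
    (h1 : 1 ≤ j1) (h1' : 1 ≤ j1') (h2 : 1 ≤ j2) (h2' : 1 ≤ j2')
    (h1n : j1 ≤ n - 1) (h1'n : j1' ≤ n - 1) (h2n : j2 ≤ n - 1) (h2'n : j2' ≤ n - 1) :
    ∫ ω, dft n (fun t => u t ω) j1 * star (dft n (fun t => u t ω) j1')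
        * dft n (fun t => u t ω) j2 * star (dft n (fun t => u t ω) j2') ∂μ =
      (((4 * Real.pi ^ 2 : ℝ) : ℂ))⁻¹ *
        ( (if j1 = j1' then 1 else 0) * (if j2 = j2' then 1 else 0)
          + (if j1 + j2 = n then 1 else 0) * (if j1' + j2' = n then 1 else 0)
          + (if j1 = j2' then 1 else 0) * (if j2 = j1' then 1 else 0)
          + (((∫ ω, (u 0 ω) ^ 4 ∂μ) - 3 : ℝ) : ℂ) * ((n : ℂ))⁻¹ *
              (if ((j1 : ℤ) + j2 - j1' - j2' = 0 ∨ (j1 : ℤ) + j2 - j1' - j2' = n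
                    ∨ (j1 : ℤ) + j2 - j1' - j2' = -(n : ℤ)) then 1 else 0) ) := by
  classical
  have hsq : (0:ℝ) ≤ 2 * Real.pi * n := by positivity
  set Cc : ℂ := ((Real.sqrt (2 * Real.pi * n) : ℝ) : ℂ)⁻¹ with hCc
  set Kc : ℂ := ((((2 * Real.pi * n) ^ 2 : ℝ)) : ℂ)⁻¹ with hKc
  have hCpow : Cc ^ 4 = Kc := by
    rw [hCc, hKc, inv_pow]
    congr 1
    rw [← Complex.ofReal_pow]
    congr 1
    rw [show (4:ℕ) = 2 * 2 from rfl, pow_mul, Real.sq_sqrt hsq]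
  have hdfte : ∀ (x : ℕ → ℝ) (j : ℕ),
      dft n x j = Cc * ∑ t ∈ Finset.Icc 1 n, (x t : ℂ) * ec n t (j:ℤ) := by
    intro x j
    rw [dft]
    congr 1
    refine Finset.sum_congr rfl fun t _ => ?_
    congr 1
    rw [ec]
    congr 1
    push_cast
    ring
  have hdfts : ∀ (x : ℕ → ℝ) (j : ℕ),
      star (dft n x j) = Cc * ∑ t ∈ Finset.Icc 1 n, (x t : ℂ) * ec n t (-(j:ℤ)) := by
    intro x j
    rw [hdfte, star_mul']
    congr 1
    · rw [hCc, star_inv₀]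
      congr 1
      exact Complex.conj_ofReal _
    · rw [star_sum]
      refine Finset.sum_congr rfl fun t _ => ?_
      rw [star_mul']
      rw [show (star ((x t : ℝ) : ℂ)) = ((x t : ℝ) : ℂ) from Complex.conj_ofReal _]
      congr 1
      exact ec_conj n t (j:ℤ)
  have hexp : (fun ω => dft n (fun t => u t ω) j1 * star (dft n (fun t => u t ω) j1')
        * dft n (fun t => u t ω) j2 * star (dft n (fun t => u t ω) j2'))
      = fun ω => ∑ t1 ∈ Finset.Icc 1 n, ∑ t2 ∈ Finset.Icc 1 n,
          ∑ t3 ∈ Finset.Icc 1 n, ∑ t4 ∈ Finset.Icc 1 n,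
          Kc * (ec n t1 (j1:ℤ) * ec n t2 (-(j1':ℤ)) * ec n t3 (j2:ℤ) * ec n t4 (-(j2':ℤ))) *
            ((u t1 ω * u t2 ω * u t3 ω * u t4 ω : ℝ) : ℂ) := by
    funext ω
    rw [hdfte, hdfts, hdfte, hdfts]
    calc (Cc * ∑ t ∈ Finset.Icc 1 n, ((u t ω : ℝ) : ℂ) * ec n t (j1:ℤ))
          * (Cc * ∑ t ∈ Finset.Icc 1 n, ((u t ω : ℝ) : ℂ) * ec n t (-(j1':ℤ)))
          * (Cc * ∑ t ∈ Finset.Icc 1 n, ((u t ω : ℝ) : ℂ) * ec n t (j2:ℤ))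
          * (Cc * ∑ t ∈ Finset.Icc 1 n, ((u t ω : ℝ) : ℂ) * ec n t (-(j2':ℤ)))
        = Cc ^ 4 * ((∑ t ∈ Finset.Icc 1 n, ((u t ω : ℝ) : ℂ) * ec n t (j1:ℤ))
          * (∑ t ∈ Finset.Icc 1 n, ((u t ω : ℝ) : ℂ) * ec n t (-(j1':ℤ)))
          * (∑ t ∈ Finset.Icc 1 n, ((u t ω : ℝ) : ℂ) * ec n t (j2:ℤ))
          * (∑ t ∈ Finset.Icc 1 n, ((u t ω : ℝ) : ℂ) * ec n t (-(j2':ℤ)))) := by ring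
      _ = Kc * ∑ t1 ∈ Finset.Icc 1 n, ∑ t2 ∈ Finset.Icc 1 n,
            ∑ t3 ∈ Finset.Icc 1 n, ∑ t4 ∈ Finset.Icc 1 n,
            (((u t1 ω : ℝ) : ℂ) * ec n t1 (j1:ℤ)) * (((u t2 ω : ℝ) : ℂ) * ec n t2 (-(j1':ℤ)))
              * (((u t3 ω : ℝ) : ℂ) * ec n t3 (j2:ℤ))
              * (((u t4 ω : ℝ) : ℂ) * ec n t4 (-(j2':ℤ))) := by
          rw [hCpow, sum_mul_sum4]
      _ = _ := by
          rw [Finset.mul_sum]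
          refine Finset.sum_congr rfl fun t1 _ => ?_
          rw [Finset.mul_sum]
          refine Finset.sum_congr rfl fun t2 _ => ?_
          rw [Finset.mul_sum]
          refine Finset.sum_congr rfl fun t3 _ => ?_
          rw [Finset.mul_sum]
          refine Finset.sum_congr rfl fun t4 _ => ?_
          push_cast
          ring
  rw [hexp]
  rw [integral_quad_sum (Finset.Icc 1 n)
    (fun t1 t2 t3 t4 ω =>
      Kc * (ec n t1 (j1:ℤ) * ec n t2 (-(j1':ℤ)) * ec n t3 (j2:ℤ) * ec n t4 (-(j2':ℤ))) *
        ((u t1 ω * u t2 ω * u t3 ω * u t4 ω : ℝ) : ℂ))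
    (fun t1 t2 t3 t4 => by
      exact ((int4 hident hmeas hmom4 t1 t2 t3 t4).ofReal (𝕜 := ℂ)).const_mul _)]
  have hInner : ∀ t1 t2 t3 t4 : ℕ,
      ∫ ω, Kc * (ec n t1 (j1:ℤ) * ec n t2 (-(j1':ℤ)) * ec n t3 (j2:ℤ) * ec n t4 (-(j2':ℤ))) *
          ((u t1 ω * u t2 ω * u t3 ω * u t4 ω : ℝ) : ℂ) ∂μ
        = Kc * ((ec n t1 (j1:ℤ) * ec n t2 (-(j1':ℤ)) * ec n t3 (j2:ℤ) * ec n t4 (-(j2':ℤ))) *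
            (((if t1 = t2 then (1:ℝ) else 0) * (if t3 = t4 then 1 else 0)
              + (if t1 = t3 then 1 else 0) * (if t2 = t4 then 1 else 0)
              + (if t1 = t4 then 1 else 0) * (if t2 = t3 then 1 else 0)
              + ((∫ ω, (u 0 ω) ^ 4 ∂μ) - 3)
                  * (if t1 = t2 ∧ t1 = t3 ∧ t1 = t4 then 1 else 0) : ℝ) : ℂ)) := by
    intro t1 t2 t3 t4
    rw [integral_const_mul,
      integral_ofReal'' μ (fun ω => u t1 ω * u t2 ω * u t3 ω * u t4 ω),
      mom4 hindep hident hmeas hmean hvar t1 t2 t3 t4, mul_assoc]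
  simp only [hInner]
  rw [quad_mul_const]
  rw [sum_eval n hn (∫ ω, (u 0 ω) ^ 4 ∂μ) j1 j1' j2 j2' h1 h1' h2 h2' h1n h1'n h2n h2'n]
  rw [hKc, final_arith n hn]
  rw [Complex.ofReal_sub]
  norm_num
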